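/- Let (A; {E_i}; A*; {E*_i}) be a Leonard system on V and fix a nonzero vector v*_0 ∈ E*_0V. Then the vectors τ_i(A)v*_0 for 0 ≤ i ≤ d form a basis of V, where τ_i(λ) = (λ-θ_0)⋯(λ-θ_{i-1}); and with respect to this basis the matrix representing A is lower bidiagonal with diagonal entries θ_0,...,θ_d and subdiagonal entries all 1. -/

import Mathlib

open Polynomial

/-- The primitive idempotent `E_i = ∏_{j ≠ i} (A - θ_j I)/(θ_i - θ_j)` of a
multiplicity-free operator `A` with eigenvalues `θ_0, …, θ_d`. -/
noncomputable def primIdem {K : Type} [Field K] {V : Type} [AddCommGroup V] [Module K V]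
    {d : ℕ} (A : Module.End K V) (θ : Fin (d+1) → K) (i : Fin (d+1)) : Module.End K V :=
  Polynomial.aeval A (∏ j ∈ Finset.univ.erase i, ((θ i - θ j)⁻¹ • (X - C (θ j))))

/-- The polynomial `τ_i(λ) = (λ-θ_0)(λ-θ_1)⋯(λ-θ_{i-1})`. -/
noncomputable def tauP {K : Type} [Field K] (d : ℕ) (θ : Fin (d+1) → K) (i : ℕ) :
    Polynomial K :=
  ∏ k ∈ Finset.univ.filter (fun k : Fin (d+1) => (k : ℕ) < i), (X - C (θ k))

/-- The polynomial `η_i(λ) = (λ-θ_d)(λ-θ_{d-1})⋯(λ-θ_{d-i+1})`. -/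
noncomputable def etaP {K : Type} [Field K] (d : ℕ) (θ : Fin (d+1) → K) (i : ℕ) :
    Polynomial K :=
  ∏ k ∈ Finset.univ.filter (fun k : Fin (d+1) => d - i < (k : ℕ)), (X - C (θ k))

/-- A Leonard system on a `(d+1)`-dimensional vector space `V` over a field `K`. -/
structure LeonardSystem (K V : Type) [Field K] [AddCommGroup V] [Module K V] (d : ℕ) where
  A : Module.End K V
  As : Module.End K V
  θ : Fin (d+1) → K
  θs : Fin (d+1) → K
  hfin : FiniteDimensional K V
  hdim : Module.finrank K V = d + 1
  θ_inj : Function.Injective θ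
  θs_inj : Function.Injective θs
  hEig : ∀ i, Module.End.HasEigenvalue A (θ i)
  hEigs : ∀ i, Module.End.HasEigenvalue As (θs i)
  hFar : ∀ i j : Fin (d+1), ((i:ℕ) + 1 < j ∨ (j:ℕ) + 1 < i) →
    primIdem A θ i * As * primIdem A θ j = 0
  hNear : ∀ i j : Fin (d+1), ((i:ℕ) + 1 = j ∨ (j:ℕ) + 1 = i) →
    primIdem A θ i * As * primIdem A θ j ≠ 0
  hFars : ∀ i j : Fin (d+1), ((i:ℕ) + 1 < j ∨ (j:ℕ) + 1 < i) →
    primIdem As θs i * A * primIdem As θs j = 0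
  hNears : ∀ i j : Fin (d+1), ((i:ℕ) + 1 = j ∨ (j:ℕ) + 1 = i) →
    primIdem As θs i * A * primIdem As θs j ≠ 0

namespace LeonardSystem

variable {K : Type} [Field K] {V : Type} [AddCommGroup V] [Module K V] {d : ℕ}
  (L : LeonardSystem K V d)

/-- `E_i`, the `i`-th primitive idempotent of `A`. -/
noncomputable def E (i : Fin (d+1)) : Module.End K V := primIdem L.A L.θ i

/-- `E*_i`, the `i`-th primitive idempotent of `A*`. -/
noncomputable def Es (i : Fin (d+1)) : Module.End K V := primIdem L.As L.θs i

/-- `τ_i(A)`. -/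
noncomputable def tau (i : ℕ) : Module.End K V := Polynomial.aeval L.A (tauP d L.θ i)

/-- `η_i(A)`. -/
noncomputable def eta (i : ℕ) : Module.End K V := Polynomial.aeval L.A (etaP d L.θ i)

/-- The first split sequence `φ_i = (θ*_0-θ*_i) tr(τ_i(A)E*_0)/tr(τ_{i-1}(A)E*_0)`,
meaningful for `1 ≤ i ≤ d`. -/
noncomputable def φ (i : ℕ) : K :=
  if h : i < d + 1 then
    (L.θs 0 - L.θs ⟨i, h⟩) * (LinearMap.trace K V (L.tau i * L.Es 0))
      / (LinearMap.trace K V (L.tau (i-1) * L.Es 0))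
  else 0

/-- The second split sequence `ϕ_i = (θ*_0-θ*_i) tr(η_i(A)E*_0)/tr(η_{i-1}(A)E*_0)`,
meaningful for `1 ≤ i ≤ d`. -/
noncomputable def ϕ (i : ℕ) : K :=
  if h : i < d + 1 then
    (L.θs 0 - L.θs ⟨i, h⟩) * (LinearMap.trace K V (L.eta i * L.Es 0))
      / (LinearMap.trace K V (L.eta (i-1) * L.Es 0))
  else 0

/-- The switching element `S = ∑_r (ϕ_d⋯ϕ_{d-r+1})/(φ_1⋯φ_r) E_r`. -/
noncomputable def S : Module.End K V :=
  ∑ r : Fin (d+1),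
    ((∏ k ∈ Finset.Icc (d - (r:ℕ) + 1) d, L.ϕ k) / (∏ k ∈ Finset.Icc 1 (r:ℕ), L.φ k)) • L.E r

/-- The dual switching element `S* = ∑_r (ϕ_1⋯ϕ_r)/(φ_1⋯φ_r) E*_r`. -/
noncomputable def Ss : Module.End K V :=
  ∑ r : Fin (d+1),
    ((∏ k ∈ Finset.Icc 1 (r:ℕ), L.ϕ k) / (∏ k ∈ Finset.Icc 1 (r:ℕ), L.φ k)) • L.Es r

end LeonardSystem

/-!
Write `v = v*_0`. Since `E*_i A E*_j = 0` for `j + 1 < i` and `∑ E*_j = I`, induction on `m`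
gives `E*_k A^m v = 0` for `m < k`; and since `E*_{k+1} A E*_k ≠ 0` while `E*_k V` is
one-dimensional, induction on `k` gives `E*_k A^k v ≠ 0`. Hence
`E*_k p(A) v = (coeff_k p) E*_k A^k v` whenever `deg p ≤ k`, so the matrix
`(E*_k τ_i(A) v)_{k,i}` is triangular with nonzero diagonal (the `τ_i` are monic of degree `i`),
and the `d + 1` vectors `τ_i(A) v` are linearly independent. The action of `A` comes from
`τ_{i+1} = (λ - θ_i) τ_i` and `τ_{d+1}(A) = 0`, the latter by Cayley–Hamilton since
the characteristic polynomial of `A` is `∏ (λ - θ_i)`.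
-/

open Polynomial Module

theorem Polynomial.prod_X_sub_C_dvd_of_forall_isRoot {K ι : Type*} [Field K] [Fintype ι]
    {μ : ι → K} (hμ : Function.Injective μ) {p : K[X]} (hp : ∀ i, p.IsRoot (μ i)) :
    ∏ i, (X - C (μ i)) ∣ p :=
  Fintype.prod_dvd_of_coprime (pairwise_coprime_X_sub_C hμ) fun i => dvd_iff_isRoot.2 (hp i)

structure Module.End.IsMultiplicityFree {K V : Type} [Field K] [AddCommGroup V] [Module K V]
    {d : ℕ} (B : Module.End K V) (μ : Fin (d+1) → K) : Prop where
  finrank_eq : finrank K V = d + 1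
  injective : Function.Injective μ
  hasEigenvalue : ∀ i, B.HasEigenvalue (μ i)

theorem primIdem_eq_aeval_lagrangeBasis {K V : Type} [Field K] [AddCommGroup V] [Module K V]
    {d : ℕ} (B : Module.End K V) (μ : Fin (d+1) → K) (i : Fin (d+1)) :
    primIdem B μ i = aeval B (Lagrange.basis Finset.univ μ i) := by
  simp only [primIdem, Lagrange.basis, Lagrange.basisDivisor, smul_eq_C_mul]

namespace Module.End.IsMultiplicityFree

variable {K V : Type} [Field K] [AddCommGroup V] [Module K V] {d : ℕ}
  {B : Module.End K V} {μ : Fin (d+1) → K}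

theorem primIdem_apply_of_mem_eigenspace (hB : B.IsMultiplicityFree μ) (i : Fin (d+1)) {v : V}
    (hv : v ∈ B.eigenspace (μ i)) : primIdem B μ i v = v := by
  rcases eq_or_ne v 0 with rfl | hv0
  · exact map_zero _
  rw [primIdem_eq_aeval_lagrangeBasis, aeval_apply_of_hasEigenvector ⟨hv, hv0⟩,
    Lagrange.eval_basis_self hB.injective.injOn (Finset.mem_univ i), one_smul]

theorem sum_primIdem (hB : B.IsMultiplicityFree μ) : ∑ i, primIdem B μ i = 1 := by
  simp only [primIdem_eq_aeval_lagrangeBasis, ← map_sum]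
  rw [Lagrange.sum_basis hB.injective.injOn Finset.univ_nonempty, map_one]

variable [FiniteDimensional K V]

theorem charpoly_eq (hB : B.IsMultiplicityFree μ) : B.charpoly = ∏ i, (X - C (μ i)) := by
  refine eq_of_monic_of_dvd_of_natDegree_le
    (monic_prod_of_monic _ _ fun i _ => monic_X_sub_C _) B.charpoly_monic ?_ ?_
  · exact prod_X_sub_C_dvd_of_forall_isRoot hB.injective fun i =>
      (hasEigenvalue_iff_isRoot_charpoly B _).1 (hB.hasEigenvalue i)
  · rw [LinearMap.charpoly_natDegree, hB.finrank_eq,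
      natDegree_prod_of_monic _ _ fun i _ => monic_X_sub_C _]
    simp

-- Cayley–Hamilton: `B.charpoly = ∏ (X - μ i)` divides `p - q`.
theorem aeval_eq_aeval (hB : B.IsMultiplicityFree μ) {p q : K[X]}
    (hpq : ∀ i, p.eval (μ i) = q.eval (μ i)) : aeval B p = aeval B q := by
  have hdvd : B.charpoly ∣ p - q := by
    rw [hB.charpoly_eq]
    exact prod_X_sub_C_dvd_of_forall_isRoot hB.injective fun i => by simp [hpq i]
  obtain ⟨r, hr⟩ := hdvd
  rw [← sub_eq_zero, ← map_sub, hr, map_mul, LinearMap.aeval_self_charpoly, zero_mul]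

theorem primIdem_mul_self (hB : B.IsMultiplicityFree μ) (i : Fin (d+1)) :
    primIdem B μ i * primIdem B μ i = primIdem B μ i := by
  simp only [primIdem_eq_aeval_lagrangeBasis, ← map_mul]
  refine hB.aeval_eq_aeval fun j => ?_
  rcases eq_or_ne i j with rfl | hij
  · simp [hB.injective.injOn]
  · simp [Lagrange.eval_basis_of_ne hij]

theorem primIdem_mul_primIdem_of_ne (hB : B.IsMultiplicityFree μ) {i j : Fin (d+1)}
    (hij : i ≠ j) : primIdem B μ i * primIdem B μ j = 0 := by
  rw [primIdem_eq_aeval_lagrangeBasis, primIdem_eq_aeval_lagrangeBasis, ← map_mul]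
  refine (hB.aeval_eq_aeval (q := 0) fun k => ?_).trans (map_zero _)
  rcases eq_or_ne i k with rfl | hik
  · simp [Lagrange.eval_basis_of_ne hij.symm]
  · simp [Lagrange.eval_basis_of_ne hik]

theorem mul_primIdem (hB : B.IsMultiplicityFree μ) (i : Fin (d+1)) :
    B * primIdem B μ i = μ i • primIdem B μ i := by
  have h := hB.aeval_eq_aeval (p := X * Lagrange.basis Finset.univ μ i)
    (q := C (μ i) * Lagrange.basis Finset.univ μ i) fun j => by
      rcases eq_or_ne i j with rfl | hij
      · simp
      · simp [Lagrange.eval_basis_of_ne hij]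
  simpa [primIdem_eq_aeval_lagrangeBasis, Algebra.smul_def] using h

theorem range_primIdem (hB : B.IsMultiplicityFree μ) (i : Fin (d+1)) :
    LinearMap.range (primIdem B μ i) = B.eigenspace (μ i) := by
  refine le_antisymm ?_ fun v hv => ⟨v, hB.primIdem_apply_of_mem_eigenspace i hv⟩
  rintro _ ⟨v, rfl⟩
  rw [mem_eigenspace_iff, ← Module.End.mul_apply, hB.mul_primIdem, LinearMap.smul_apply]

/-- The geometric multiplicity is at most the algebraic one, which is `1` because the
characteristic polynomial `∏ (X - μ i)` is separable. -/
theorem finrank_eigenspace (hB : B.IsMultiplicityFree μ) (i : Fin (d+1)) :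
    finrank K (B.eigenspace (μ i)) = 1 := by
  refine le_antisymm ?_ (pos_finrank_genEigenspace_of_hasEigenvalue (hB.hasEigenvalue i) one_pos)
  refine (LinearMap.finrank_eigenspace_le B (μ i)).trans ?_
  rw [hB.charpoly_eq]
  exact rootMultiplicity_le_one_of_separable (separable_prod_X_sub_C_iff.2 hB.injective) _

end Module.End.IsMultiplicityFree

theorem linearIndependent_of_triangular {K M N ι : Type*} [DivisionRing K] [AddCommGroup M]
    [Module K M] [AddCommGroup N] [Module K N] [Fintype ι] [LinearOrder ι] {v : ι → M}
    (f : ι → M →ₗ[K] N) (hlt : ∀ i k, i < k → f k (v i) = 0) (hdiag : ∀ k, f k (v k) ≠ 0) :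
    LinearIndependent K v := by
  classical
  rw [Fintype.linearIndependent_iff]
  intro g hg
  by_contra! hne
  obtain ⟨k, hkmem, hmax⟩ := (Finset.univ.filter (g · ≠ 0)).exists_max_image id
    (by simpa [Finset.filter_nonempty_iff] using hne)
  have hk : g k ≠ 0 := (Finset.mem_filter.1 hkmem).2
  have hfk : f k (∑ i, g i • v i) = g k • f k (v k) := by
    rw [map_sum, Finset.sum_eq_single k (fun i _ hik => ?_) (absurd (Finset.mem_univ k)),
      map_smul]
    rcases lt_or_gt_of_ne hik with hik' | hki
    · rw [map_smul, hlt i k hik', smul_zero]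
    · have hgi : g i = 0 := by
        by_contra hgi
        exact (hmax i (by simpa using hgi)).not_gt hki
      rw [hgi, zero_smul, map_zero]
  rw [hg, map_zero] at hfk
  exact smul_ne_zero hk (hdiag k) hfk.symm

section IdempotentChain

variable {K V : Type} [Field K] [AddCommGroup V] [Module K V] {d : ℕ}
  {E : Fin (d+1) → Module.End K V} {B : Module.End K V}

theorem apply_eq_sum_apply_of_sum_eq_one (hsum : ∑ j, E j = 1) (F : Module.End K V) (x : V) :
    F x = ∑ j, F (E j x) := by
  rw [← map_sum, ← LinearMap.sum_apply, hsum, Module.End.one_apply]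

theorem apply_pow_apply_eq_zero_of_lt (hmul : ∀ i j, i ≠ j → E i * E j = 0)
    (hsum : ∑ j, E j = 1) (hlower : ∀ i j : Fin (d+1), (j:ℕ) + 1 < i → E i * B * E j = 0)
    {v : V} (hv : E 0 v = v) {m : ℕ} {k : Fin (d+1)} (hmk : m < k) :
    E k ((B ^ m) v) = 0 := by
  induction m generalizing k with
  | zero =>
    have hk : k ≠ 0 := fun h => by simp [h] at hmk
    rw [pow_zero, Module.End.one_apply, ← hv, ← Module.End.mul_apply, hmul k 0 hk,
      LinearMap.zero_apply]
  | succ m ih =>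
    rw [pow_succ', Module.End.mul_apply, ← Module.End.mul_apply (E k),
      apply_eq_sum_apply_of_sum_eq_one hsum]
    refine Finset.sum_eq_zero fun j _ => ?_
    by_cases hj : (j:ℕ) + 1 < k
    · rw [← Module.End.mul_apply, hlower k j hj, LinearMap.zero_apply]
    · rw [ih (k := j) (by omega), map_zero]

theorem mul_eq_zero_of_apply_eq_zero {F P : Module.End K V}
    (hP : finrank K (LinearMap.range P) = 1) {w : V} (hw : w ∈ LinearMap.range P) (hw0 : w ≠ 0)
    (hFw : F w = 0) : F * P = 0 := by
  have hspan := (finrank_eq_one_iff_of_nonzero' (⟨w, hw⟩ : LinearMap.range P)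
    (by simpa using hw0)).1 hP
  ext x
  obtain ⟨c, hc⟩ := hspan ⟨P x, x, rfl⟩
  have hPx : P x = c • w := (congrArg Subtype.val hc).symm
  rw [Module.End.mul_apply, LinearMap.zero_apply, hPx, map_smul, hFw, smul_zero]

theorem apply_pow_apply_ne_zero (hmul : ∀ i j, i ≠ j → E i * E j = 0)
    (hsum : ∑ j, E j = 1) (hlower : ∀ i j : Fin (d+1), (j:ℕ) + 1 < i → E i * B * E j = 0)
    (hnear : ∀ i : Fin d, E i.succ * B * E i.castSucc ≠ 0)
    (hrank : ∀ i, finrank K (LinearMap.range (E i)) = 1)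
    {v : V} (hv : E 0 v = v) (hv0 : v ≠ 0) (k : Fin (d+1)) :
    E k ((B ^ (k:ℕ)) v) ≠ 0 := by
  induction k using Fin.induction with
  | zero => simpa [hv] using hv0
  | succ i ih =>
    set w := E i.castSucc ((B ^ (i:ℕ)) v)
    have hsucc : E i.succ ((B ^ ((i:ℕ) + 1)) v) = E i.succ (B w) := by
      rw [pow_succ', Module.End.mul_apply, ← Module.End.mul_apply (E i.succ),
        apply_eq_sum_apply_of_sum_eq_one hsum,
        Finset.sum_eq_single i.castSucc (fun j _ hj => ?_) (by simp)]
      · rfl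
      rcases lt_or_gt_of_ne hj with hlt | hgt
      · rw [← Module.End.mul_apply, hlower _ _ (by simpa [Fin.lt_def] using hlt),
          LinearMap.zero_apply]
      · rw [apply_pow_apply_eq_zero_of_lt hmul hsum hlower hv (by simpa [Fin.lt_def] using hgt),
          map_zero]
    rw [Fin.val_succ, hsucc]
    intro hzero
    exact hnear i (mul_eq_zero_of_apply_eq_zero (hrank _) ⟨_, rfl⟩ ih hzero)

theorem apply_aeval_apply (hmul : ∀ i j, i ≠ j → E i * E j = 0)
    (hsum : ∑ j, E j = 1) (hlower : ∀ i j : Fin (d+1), (j:ℕ) + 1 < i → E i * B * E j = 0)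
    {v : V} (hv : E 0 v = v) {p : K[X]} {k : Fin (d+1)} (hp : p.natDegree ≤ k) :
    E k (aeval B p v) = p.coeff k • E k ((B ^ (k:ℕ)) v) := by
  rw [aeval_eq_sum_range' (Nat.lt_succ_of_le hp), LinearMap.sum_apply, map_sum,
    Finset.sum_range_succ, Finset.sum_eq_zero fun m hm => ?_, zero_add, LinearMap.smul_apply,
    map_smul]
  rw [LinearMap.smul_apply, map_smul,
    apply_pow_apply_eq_zero_of_lt hmul hsum hlower hv (Finset.mem_range.1 hm), smul_zero]

end IdempotentChain

section TauPolynomial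

variable {K : Type} [Field K] {d : ℕ} (θ : Fin (d+1) → K)

theorem tauP_zero : tauP d θ 0 = 1 :=
  Finset.prod_eq_one fun _ hk => absurd (Finset.mem_filter.1 hk).2 (Nat.not_lt_zero _)

theorem tauP_succ {i : ℕ} (hi : i < d + 1) :
    tauP d θ (i+1) = (X - C (θ ⟨i, hi⟩)) * tauP d θ i := by
  have hset : Finset.univ.filter (fun k : Fin (d+1) => (k : ℕ) < i + 1) =
      insert ⟨i, hi⟩ (Finset.univ.filter (fun k : Fin (d+1) => (k : ℕ) < i)) := by
    ext k
    simp only [Finset.mem_filter, Finset.mem_univ, true_and, Finset.mem_insert, Fin.ext_iff]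
    omega
  rw [tauP, hset, Finset.prod_insert (by simp)]
  rfl

theorem tauP_monic (i : ℕ) : (tauP d θ i).Monic :=
  monic_prod_of_monic _ _ fun _ _ => monic_X_sub_C _

theorem natDegree_tauP {i : ℕ} (hi : i ≤ d + 1) : (tauP d θ i).natDegree = i := by
  induction i with
  | zero => rw [tauP_zero, natDegree_one]
  | succ i ih =>
    rw [tauP_succ θ (by omega), (monic_X_sub_C _).natDegree_mul (tauP_monic θ i),
      natDegree_X_sub_C, ih (by omega), add_comm]

theorem coeff_tauP_self {i : ℕ} (hi : i ≤ d + 1) : (tauP d θ i).coeff i = 1 := by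
  simpa [natDegree_tauP θ hi] using (tauP_monic θ i).coeff_natDegree

theorem tauP_succ_last : tauP d θ (d+1) = ∏ i, (X - C (θ i)) := by
  rw [tauP, Finset.filter_true_of_mem fun k _ => k.isLt]

end TauPolynomial

namespace LeonardSystem

variable {K V : Type} [Field K] [AddCommGroup V] [Module K V] {d : ℕ}
  (L : LeonardSystem K V d)

theorem isMultiplicityFree_A : L.A.IsMultiplicityFree L.θ := ⟨L.hdim, L.θ_inj, L.hEig⟩

theorem isMultiplicityFree_As : L.As.IsMultiplicityFree L.θs := ⟨L.hdim, L.θs_inj, L.hEigs⟩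

theorem tau_last : L.tau (d+1) = 0 := by
  have := L.hfin
  rw [tau, tauP_succ_last, ← L.isMultiplicityFree_A.charpoly_eq, LinearMap.aeval_self_charpoly]

theorem A_tau_apply (j : Fin (d+1)) (v : V) :
    L.A (L.tau j v) = L.θ j • L.tau j v + L.tau (j+1) v := by
  rw [tau, tau, tauP_succ L.θ j.isLt, map_mul, map_sub, aeval_X, aeval_C, Module.End.mul_apply,
    LinearMap.sub_apply, Module.algebraMap_end_apply, Fin.eta, add_sub_cancel]

theorem Es_apply_of_mem_range {i : Fin (d+1)} {v : V} (hv : v ∈ LinearMap.range (L.Es i)) :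
    L.Es i v = v := by
  have := L.hfin
  obtain ⟨u, rfl⟩ := hv
  rw [← Module.End.mul_apply, Es, L.isMultiplicityFree_As.primIdem_mul_self]

theorem Es_mul_Es_of_ne {i j : Fin (d+1)} (hij : i ≠ j) : L.Es i * L.Es j = 0 := by
  have := L.hfin
  exact L.isMultiplicityFree_As.primIdem_mul_primIdem_of_ne hij

theorem sum_Es : ∑ i, L.Es i = 1 :=
  L.isMultiplicityFree_As.sum_primIdem

theorem Es_mul_A_mul_Es_of_lt {i j : Fin (d+1)} (hji : (j:ℕ) + 1 < i) :
    L.Es i * L.A * L.Es j = 0 :=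
  L.hFars i j (Or.inr hji)

theorem Es_aeval_A_apply {v : V} (hv : L.Es 0 v = v) {p : K[X]} {k : Fin (d+1)}
    (hp : p.natDegree ≤ k) : L.Es k (aeval L.A p v) = p.coeff k • L.Es k ((L.A ^ (k:ℕ)) v) :=
  apply_aeval_apply (fun _ _ => L.Es_mul_Es_of_ne) L.sum_Es (fun _ _ => L.Es_mul_A_mul_Es_of_lt)
    hv hp

theorem Es_pow_A_apply_ne_zero {v : V} (hv : L.Es 0 v = v) (hv0 : v ≠ 0) (k : Fin (d+1)) :
    L.Es k ((L.A ^ (k:ℕ)) v) ≠ 0 := by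
  have := L.hfin
  refine apply_pow_apply_ne_zero (fun _ _ => L.Es_mul_Es_of_ne) L.sum_Es
    (fun _ _ => L.Es_mul_A_mul_Es_of_lt) (fun _ => L.hNears _ _ (Or.inr (by simp)))
    (fun i => ?_) hv hv0 k
  rw [Es, L.isMultiplicityFree_As.range_primIdem, L.isMultiplicityFree_As.finrank_eigenspace]

theorem linearIndependent_tau_apply {v : V} (hv : v ∈ LinearMap.range (L.Es 0)) (hv0 : v ≠ 0) :
    LinearIndependent K (fun i : Fin (d+1) => L.tau i v) := by
  have hv' := L.Es_apply_of_mem_range hv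
  have hdeg (i : Fin (d+1)) : (tauP d L.θ i).natDegree = i := natDegree_tauP L.θ i.isLt.le
  refine linearIndependent_of_triangular L.Es (fun i k hik => ?_) fun k => ?_
  · rw [tau, L.Es_aeval_A_apply hv' ((hdeg i).trans_le hik.le),
      coeff_eq_zero_of_natDegree_lt ((hdeg i).trans_lt hik), zero_smul]
  · rw [tau, L.Es_aeval_A_apply hv' (hdeg k).le, coeff_tauP_self L.θ k.isLt.le, one_smul]
    exact L.Es_pow_A_apply_ne_zero hv' hv0 k

end LeonardSystem

/-- the vectors `τ_i(A) v*_0` form a basis of `V`, with respect to which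
`A` is lower bidiagonal with diagonal `θ_0,…,θ_d` and subdiagonal entries `1`. -/
theorem LeonardSystem.tau_basis {K : Type} [Field K] {V : Type}
    [AddCommGroup V] [Module K V] {d : ℕ} (L : LeonardSystem K V d)
    (v0 : V) (hv : v0 ∈ LinearMap.range (L.Es 0)) (hv0 : v0 ≠ 0) :
    LinearIndependent K (fun i : Fin (d+1) => L.tau (i:ℕ) v0) ∧
    Submodule.span K (Set.range (fun i : Fin (d+1) => L.tau (i:ℕ) v0)) = ⊤ ∧
    ∀ j : Fin (d+1), L.A (L.tau (j:ℕ) v0) =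
      L.θ j • L.tau (j:ℕ) v0 +
        (if h : (j:ℕ) + 1 < d + 1 then L.tau ((j:ℕ) + 1) v0 else 0) := by
  have hli := L.linearIndependent_tau_apply hv hv0
  refine ⟨hli, hli.span_eq_top_of_card_eq_finrank (by simp [L.hdim]), fun j => ?_⟩
  rw [L.A_tau_apply]
  split_ifs with hj
  · rfl
  · rw [le_antisymm j.isLt (not_lt.1 hj), L.tau_last, LinearMap.zero_apply]
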